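/- arXiv:1006.5504 — 2 statements merged into one kernel-verified Lean document; each statement's English description precedes it below -/
import Mathlib

section
/- Let τ: ℝ_{≥0} → ℝ_{≥0} be a continuous strictly increasing bijection with τ(0)=0, and let τ': ℝ_{≥0} → ℝ_{≥0} be another such bijection. Suppose there exist r₀ ≥ 0 and C ≥ 1 with τ⁻¹(r) ≤ C·(τ')⁻¹(r) for all r ≥ r₀, and suppose τ'(αR) ≤ α²τ'(R) for all α ≥ 1, R ≥ 0. Then there exists R₀ ≥ 0 such that τ'(R) ≤ C² τ(R) for all R ≥ R₀. -/
/-- Comparability of inverse functions implies comparability of the functions themselves,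
for functions satisfying the doubling-type estimate `τ'(αR) ≤ α²τ'(R)`. Here `σ` and `σ'`
are the inverse bijections of `τ` and `τ'` on `[0,∞)`. -/
theorem stmt_12 (τ τ' σ σ' : ℝ → ℝ)
    (hτmono : StrictMonoOn τ (Set.Ici 0)) (hτ'mono : StrictMonoOn τ' (Set.Ici 0))
    (hτcont : ContinuousOn τ (Set.Ici 0)) (hτ'cont : ContinuousOn τ' (Set.Ici 0))
    (hτ0 : τ 0 = 0) (hτ'0 : τ' 0 = 0)
    (hσ : ∀ r : ℝ, 0 ≤ r → 0 ≤ σ r ∧ τ (σ r) = r)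
    (hσ' : ∀ r : ℝ, 0 ≤ r → 0 ≤ σ' r ∧ τ' (σ' r) = r)
    (r₀ C : ℝ) (hr₀ : 0 ≤ r₀) (hC : 1 ≤ C)
    (hcomp : ∀ r : ℝ, r₀ ≤ r → σ r ≤ C * σ' r)
    (hdoubling : ∀ α R : ℝ, 1 ≤ α → 0 ≤ R → τ' (α * R) ≤ α ^ 2 * τ' R) :
    ∃ R₀ : ℝ, 0 ≤ R₀ ∧ ∀ R : ℝ, R₀ ≤ R → τ' R ≤ C ^ 2 * τ R := by
  obtain ⟨hσr₀, hτσr₀⟩ := hσ r₀ hr₀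
  refine ⟨σ r₀, hσr₀, fun R hR => ?_⟩
  have hR0 : (0:ℝ) ≤ R := le_trans hσr₀ hR
  have hτR : r₀ ≤ τ R := by
    rw [← hτσr₀]
    exact hτmono.monotoneOn hσr₀ hR0 hR
  have hτR0 : (0:ℝ) ≤ τ R := le_trans hr₀ hτR
  obtain ⟨hσ1, hσ2⟩ := hσ (τ R) hτR0
  obtain ⟨hσ'1, hσ'2⟩ := hσ' (τ R) hτR0
  have hσeq : σ (τ R) = R := hτmono.injOn hσ1 hR0 hσ2
  have hRle : R ≤ C * σ' (τ R) := by
    calc R = σ (τ R) := hσeq.symm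
      _ ≤ C * σ' (τ R) := hcomp (τ R) hτR
  have h1 : τ' R ≤ τ' (C * σ' (τ R)) :=
    hτ'mono.monotoneOn hR0 (mul_nonneg (le_trans zero_le_one hC) hσ'1) hRle
  have h2 : τ' (C * σ' (τ R)) ≤ C ^ 2 * τ' (σ' (τ R)) := hdoubling C (σ' (τ R)) hC hσ'1
  calc τ' R ≤ C ^ 2 * τ' (σ' (τ R)) := le_trans h1 h2
    _ = C ^ 2 * τ R := by rw [hσ'2]
end

section
/- Define τ(R) = (1/α) R log(R+1) for a fixed α > 0, a strictly increasing bijection of ℝ_{≥0}. Then lim_{r→∞} [r² τ⁻¹(r²) log r] / r⁴ = α/2. -/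
/-!
Put `s = r²`, so the quantity is `σ(s) log s / (2 s)`. Since `s = σ(s) log(σ(s) + 1) / α`, this is
`(α / 2) · log s / log(σ(s) + 1)`, and `log s = log σ(s) + log log(σ(s) + 1) - log α` is
asymptotic to `log(σ(s) + 1)` because `σ(s) → ∞` (indeed `σ(s)² ≥ α s`, as `log(x + 1) ≤ x`).
-/

open Filter Topology Real

lemma tendsto_log_div_log_add_atTop (y : ℝ) :
    Tendsto (fun x : ℝ => log x / log (x + y)) atTop (𝓝 1) := by
  have hlog : Tendsto (fun x : ℝ => log (x + y)) atTop atTop :=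
    tendsto_log_atTop.comp (tendsto_atTop_add_const_right _ y tendsto_id)
  have hdiff := (tendsto_log_comp_add_sub_log y).mul hlog.inv_tendsto_atTop
  rw [zero_mul] at hdiff
  have hlim := (tendsto_const_nhds (x := (1 : ℝ))).sub hdiff
  rw [sub_zero] at hlim
  refine hlim.congr' ?_
  filter_upwards [hlog.eventually_gt_atTop 0] with x hx
  simp only [Pi.inv_apply]
  field_simp
  ring

lemma tendsto_log_mul_log_add_one_div_log_add_one {c : ℝ} (hc : c ≠ 0) :
    Tendsto (fun R : ℝ => log (c * R * log (R + 1)) / log (R + 1)) atTop (𝓝 1) := by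
  have hlog : Tendsto (fun R : ℝ => log (R + 1)) atTop atTop :=
    tendsto_log_atTop.comp (tendsto_atTop_add_const_right _ 1 tendsto_id)
  have hconst : Tendsto (fun R : ℝ => log c / log (R + 1)) atTop (𝓝 0) :=
    tendsto_const_nhds.div_atTop hlog
  have hloglog : Tendsto (fun R : ℝ => log (log (R + 1)) / log (R + 1)) atTop (𝓝 0) :=
    isLittleO_log_id_atTop.tendsto_div_nhds_zero.comp hlog
  have hlim := (hconst.add (tendsto_log_div_log_add_atTop 1)).add hloglog
  rw [zero_add, add_zero] at hlim
  refine hlim.congr' ?_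
  filter_upwards [eventually_gt_atTop 0, hlog.eventually_gt_atTop 0] with R hR hL
  rw [log_mul (by positivity) hL.ne', log_mul hc hR.ne']
  ring

lemma tendsto_atTop_of_mul_log_add_one_eq {α : ℝ} (hα : 0 < α) {σ : ℝ → ℝ}
    (hσ : ∀ r : ℝ, 0 ≤ r → 0 ≤ σ r ∧ σ r * log (σ r + 1) = α * r) :
    Tendsto σ atTop atTop := by
  refine tendsto_atTop_mono' _ ?_
    (tendsto_sqrt_atTop.comp (tendsto_id.const_mul_atTop hα))
  filter_upwards [eventually_ge_atTop 0] with r hr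
  obtain ⟨hσ0, hσr⟩ := hσ r hr
  have hlog_le : log (σ r + 1) ≤ σ r := by
    linarith [log_le_sub_one_of_pos (x := σ r + 1) (by linarith)]
  have hsq : α * r ≤ σ r ^ 2 := by
    rw [← hσr, sq]
    exact mul_le_mul_of_nonneg_left hlog_le hσ0
  exact sqrt_le_iff.mpr ⟨hσ0, hsq⟩

lemma tendsto_mul_log_div_of_mul_log_add_one_eq {α : ℝ} (hα : 0 < α) {σ : ℝ → ℝ}
    (hσ : ∀ r : ℝ, 0 ≤ r → 0 ≤ σ r ∧ σ r * log (σ r + 1) = α * r) :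
    Tendsto (fun s => σ s * log s / s) atTop (𝓝 α) := by
  have hσtop := tendsto_atTop_of_mul_log_add_one_eq hα hσ
  have hlim := ((tendsto_log_mul_log_add_one_div_log_add_one (inv_ne_zero hα.ne')).comp
    hσtop).const_mul α
  rw [mul_one] at hlim
  refine hlim.congr' ?_
  filter_upwards [eventually_gt_atTop 0, hσtop.eventually_gt_atTop 0] with s hs hσs
  obtain ⟨-, hσeq⟩ := hσ s hs.le
  have hL : 0 < log (σ s + 1) := log_pos (by linarith)
  have hs_eq : s = α⁻¹ * σ s * log (σ s + 1) := by
    rw [mul_assoc, hσeq, inv_mul_cancel_left₀ hα.ne']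
  simp only [Function.comp_apply]
  rw [← hs_eq]
  field_simp
  linear_combination -log s * hσeq

/-- Proposition 6.2 (abstract form): for `τ(R) = (1/α) R log(R+1)` with inverse `σ` on `[0,∞)`,
`r² σ(r²) log r / r⁴ → α/2` as `r → ∞`. -/
theorem stmt_17 (α : ℝ) (hα : 0 < α) (σ : ℝ → ℝ)
    (hσ : ∀ r : ℝ, 0 ≤ r → 0 ≤ σ r ∧ (1 / α) * σ r * Real.log (σ r + 1) = r) :
    Tendsto (fun r : ℝ => r ^ 2 * σ (r ^ 2) * Real.log r / r ^ 4) atTop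
      (nhds (α / 2)) := by
  have hσ' : ∀ r : ℝ, 0 ≤ r → 0 ≤ σ r ∧ σ r * log (σ r + 1) = α * r := fun r hr => by
    obtain ⟨hσ0, hσr⟩ := hσ r hr
    field_simp at hσr
    exact ⟨hσ0, by linarith⟩
  have hlim := ((tendsto_mul_log_div_of_mul_log_add_one_eq hα hσ').comp
    (tendsto_pow_atTop two_ne_zero)).div_const 2
  refine hlim.congr' ?_
  filter_upwards [eventually_ne_atTop 0] with r hr
  simp only [Function.comp_apply, log_pow]
  field_simp
  ring
end
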